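/- arXiv:1001.0200 — 3 statements merged into one kernel-verified Lean document; each statement's English description precedes it below -/
import Mathlib

section
/- If $(a_{ij})$ and $(b_{ij})$ are $n\times n$ real matrices with $0 < b_{ij} < a_{ij}$ for all $i,j$, then $\det(a_{ij}-b_{ij}) \ge \det(a_{ij}) - \sum_{k=1}^n \max_{1\le l\le n} (b_{kl}/a_{kl}) \cdot \mathrm{per}(a_{ij})$, where $\mathrm{per}$ denotes the permanent. -/
open Finset

lemma one_sub_prod_le_sum_one_sub {ι : Type*} (s : Finset ι) (t : ι → ℝ)
    (h0 : ∀ i ∈ s, 0 ≤ t i) (h1 : ∀ i ∈ s, t i ≤ 1) :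
    1 - ∏ i ∈ s, t i ≤ ∑ i ∈ s, (1 - t i) := by
  induction s using Finset.cons_induction with
  | empty => simp
  | cons x s hx ih =>
    rw [Finset.prod_cons, Finset.sum_cons]
    have h0' : ∀ i ∈ s, 0 ≤ t i := fun i hi => h0 i (Finset.mem_cons_of_mem hi)
    have h1' : ∀ i ∈ s, t i ≤ 1 := fun i hi => h1 i (Finset.mem_cons_of_mem hi)
    have hx0 : 0 ≤ t x := h0 x (Finset.mem_cons_self x s)
    have hx1 : t x ≤ 1 := h1 x (Finset.mem_cons_self x s)
    have hps : ∏ i ∈ s, t i ≤ 1 := Finset.prod_le_one h0' h1'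
    have hps0 : 0 ≤ ∏ i ∈ s, t i := Finset.prod_nonneg h0'
    nlinarith [ih h0' h1']

/-- Determinant-permanent perturbation inequality. -/
theorem det_sub_ge_det_sub_per (n : ℕ) (hn : 0 < n)
    (a b : Matrix (Fin n) (Fin n) ℝ)
    (hab : ∀ i j, 0 < b i j ∧ b i j < a i j) :
    Matrix.det (a - b) ≥ Matrix.det a -
      (∑ k : Fin n, Finset.univ.sup' (Finset.univ_nonempty_iff.mpr ⟨⟨0, hn⟩⟩)
        (fun l => b k l / a k l)) *
      (∑ σ : Equiv.Perm (Fin n), ∏ i : Fin n, a i (σ i)) := by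
  have hne : (Finset.univ : Finset (Fin n)).Nonempty := Finset.univ_nonempty_iff.mpr ⟨⟨0, hn⟩⟩
  set S := ∑ k : Fin n, Finset.univ.sup' hne (fun l => b k l / a k l) with hS
  have ha : ∀ i j, 0 < a i j := fun i j => (hab i j).1.trans (hab i j).2
  -- key per-permutation bound
  have key : ∀ σ : Equiv.Perm (Fin n),
      (∏ i, a (σ i) i) - ∏ i, (a - b) (σ i) i ≤ S * ∏ i, a (σ i) i := by
    intro σ
    set t : Fin n → ℝ := fun i => (a (σ i) i - b (σ i) i) / a (σ i) i with ht
    have h0 : ∀ i ∈ Finset.univ, (0:ℝ) ≤ t i := by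
      intro i _
      exact div_nonneg (by linarith [(hab (σ i) i).2]) (ha (σ i) i).le
    have h1 : ∀ i ∈ Finset.univ, t i ≤ 1 := by
      intro i _
      rw [div_le_one (ha (σ i) i)]
      linarith [(hab (σ i) i).1]
    have hprod : ∏ i, (a - b) (σ i) i = (∏ i, t i) * ∏ i, a (σ i) i := by
      rw [← Finset.prod_mul_distrib]
      apply Finset.prod_congr rfl
      intro i _
      simp only [Matrix.sub_apply, ht]
      rw [div_mul_cancel₀ _ (ha (σ i) i).ne']
    have hsum : ∑ i, (1 - t i) ≤ S := by
      rw [hS]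
      rw [← Equiv.sum_comp σ (fun k => Finset.univ.sup' hne (fun l => b k l / a k l))]
      apply Finset.sum_le_sum
      intro i _
      have : 1 - t i = b (σ i) i / a (σ i) i := by
        show 1 - (a (σ i) i - b (σ i) i) / a (σ i) i = _; rw [sub_div, div_self (ha (σ i) i).ne']; ring
      rw [this]
      exact Finset.le_sup' (fun l => b (σ i) l / a (σ i) l) (Finset.mem_univ i)
    have hmain := one_sub_prod_le_sum_one_sub Finset.univ t h0 h1
    have hpa : 0 < ∏ i, a (σ i) i := Finset.prod_pos (fun i _ => ha (σ i) i)
    rw [hprod]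
    calc (∏ i, a (σ i) i) - (∏ i, t i) * ∏ i, a (σ i) i
        = (1 - ∏ i, t i) * ∏ i, a (σ i) i := by ring
      _ ≤ (∑ i, (1 - t i)) * ∏ i, a (σ i) i := by
          apply mul_le_mul_of_nonneg_right hmain hpa.le
      _ ≤ S * ∏ i, a (σ i) i := mul_le_mul_of_nonneg_right hsum hpa.le
  -- rewrite permanent with σ i in rows
  have hper : (∑ σ : Equiv.Perm (Fin n), ∏ i : Fin n, a i (σ i))
      = ∑ σ : Equiv.Perm (Fin n), ∏ i : Fin n, a (σ i) i := by
    rw [← Equiv.sum_comp (Equiv.inv (Equiv.Perm (Fin n)))]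
    apply Finset.sum_congr rfl
    intro σ _
    simp only [Equiv.inv_apply]
    rw [← Equiv.prod_comp σ (fun i => a i (σ⁻¹ i))]
    simp
  rw [hper, ge_iff_le, sub_le_iff_le_add, Matrix.det_apply', Matrix.det_apply',
    Finset.mul_sum, ← Finset.sum_add_distrib]
  apply Finset.sum_le_sum
  intro σ _
  have hle : ∏ i, (a - b) (σ i) i ≤ ∏ i, a (σ i) i := by
    apply Finset.prod_le_prod
    · intro i _; simp only [Matrix.sub_apply]; linarith [(hab (σ i) i).1, (hab (σ i) i).2]
    · intro i _; simp only [Matrix.sub_apply]; linarith [(hab (σ i) i).1]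
  have hk := key σ
  rcases Int.units_eq_one_or (Equiv.Perm.sign σ) with h | h <;>
    simp only [h, Units.val_one, Units.val_neg, Int.cast_one, Int.cast_neg] <;> nlinarith
end

section
/- For positive reals $\delta_1,\dots,\delta_n$, the Cauchy matrix identity holds: $\det\left(\frac{1}{\delta_i+\delta_j}\right)_{1\le i,j\le n} = \frac{1}{2^n \prod_{i=1}^n \delta_i} \prod_{1\le i<j\le n} \left(\frac{\delta_j-\delta_i}{\delta_j+\delta_i}\right)^2$. -/
/-!
Factor `(x₀ + y_j)⁻¹` out of column `j` of the Cauchy matrix `((x_i + y_j)⁻¹)`: its first row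
becomes all ones. Subtracting the first column from the others and expanding along the first row
leaves the `n × n` matrix with entries `(x_i - x₀)(y_j - y₀) / ((x_i + y₀)(x_i + y_j))`, a Cauchy
matrix with rescaled rows and columns, so induction on the size gives
`det = ∏_{i<j} (x_j - x_i)(y_j - y_i) / ∏_{i,j} (x_i + y_j)`.
For `x = y = δ` the diagonal factors of the denominator give `2ⁿ ∏ δ_i` and the off-diagonal
ones pair up into squares.
-/

open Finset

theorem Finset.prod_prod_eq_prod_diag_mul_prod_prod_Ioi {ι M : Type*} [CommMonoid M] [Fintype ι]
    [LinearOrder ι] [LocallyFiniteOrderTop ι] [LocallyFiniteOrderBot ι] (f : ι → ι → M) :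
    ∏ i, ∏ j, f i j = (∏ i, f i i) * ∏ i, ∏ j ∈ Ioi i, f i j * f j i := by
  calc ∏ i, ∏ j, f i j = ∏ i, (f i i * ∏ j ∈ {i}ᶜ, f i j) :=
        prod_congr rfl fun i _ => Fintype.prod_eq_mul_prod_compl i _
    _ = _ := by rw [prod_mul_distrib, prod_prod_Ioi_mul_eq_prod_prod_off_diag fun i j => f j i]

namespace Matrix

theorem det_eq_of_row_zero_eq_one {R : Type*} [CommRing R] {n : ℕ}
    (A : Matrix (Fin (n + 1)) (Fin (n + 1)) R) (h : ∀ j, A 0 j = 1) :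
    A.det = det (of fun i j : Fin n => A i.succ j.succ - A i.succ 0) := by
  set c : Fin (n + 1) → R := Fin.cons 0 fun _ => 1
  set B : Matrix (Fin (n + 1)) (Fin (n + 1)) R := of fun i j => A i j - c j * A i 0
  have hAB : A.det = B.det := by
    rw [← det_transpose A, ← det_transpose B]
    refine det_eq_of_forall_row_eq_smul_add_const c 0 rfl fun j i => ?_
    cases j using Fin.cases <;> simp [B, c]
  rw [hAB, det_succ_row_zero, Fin.sum_univ_succ]
  simp [B, c, h, submatrix]

variable {K : Type*} [Field K]

def cauchy {m n : Type*} (x : m → K) (y : n → K) : Matrix m n K :=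
  of fun i j => (x i + y j)⁻¹

theorem det_cauchy_succ {n : ℕ} (x y : Fin (n + 1) → K) (h : ∀ i j, x i + y j ≠ 0) :
    det (cauchy x y) = (∏ i : Fin n, (x i.succ - x 0) / (x i.succ + y 0)) *
      det (cauchy (Fin.tail x) (Fin.tail y)) * (∏ j : Fin n, (y j.succ - y 0)) *
        (∏ j, (x 0 + y j))⁻¹ := by
  set D : Matrix (Fin (n + 1)) (Fin (n + 1)) K := of fun i j => (x 0 + y j) / (x i + y j)
  have hD : cauchy x y = D * diagonal fun j => (x 0 + y j)⁻¹ := by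
    ext i j
    simp only [cauchy, D, of_apply, mul_diagonal]
    field_simp [h 0 j]
  have hD_sub : (of fun i j : Fin n => D i.succ j.succ - D i.succ 0) =
      diagonal (fun i => (x i.succ - x 0) / (x i.succ + y 0)) *
        cauchy (Fin.tail x) (Fin.tail y) * diagonal fun j => y j.succ - y 0 := by
    ext i j
    have := h i.succ j.succ
    have := h i.succ 0
    simp only [D, cauchy, Fin.tail, of_apply, mul_diagonal, diagonal_mul]
    field_simp
    ring
  rw [hD, det_mul, det_eq_of_row_zero_eq_one D (fun j => div_self (h 0 j)), hD_sub, det_mul,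
    det_mul, det_diagonal, det_diagonal, det_diagonal, prod_inv_distrib]

theorem det_cauchy {n : ℕ} (x y : Fin n → K) (h : ∀ i j, x i + y j ≠ 0) :
    det (cauchy x y) =
      (∏ i, ∏ j ∈ Ioi i, (x j - x i) * (y j - y i)) / ∏ i, ∏ j, (x i + y j) := by
  induction n with
  | zero => simp
  | succ n ih =>
    have hQ : ∏ i, ∏ j, (x i + y j) ≠ 0 :=
      prod_ne_zero_iff.mpr fun i _ => prod_ne_zero_iff.mpr fun j _ => h i j
    rw [det_cauchy_succ x y h, ih (Fin.tail x) (Fin.tail y) fun i j => h _ _]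
    simp only [Fin.prod_univ_succ, Fin.prod_Ioi_zero, Fin.prod_Ioi_succ, Fin.tail,
      prod_div_distrib, prod_mul_distrib] at hQ ⊢
    field_simp

end Matrix

/-- Cauchy determinant identity for the matrix `1/(δ i + δ j)`. -/
theorem cauchy_det_identity (n : ℕ) (δ : Fin n → ℝ) (hδ : ∀ i, 0 < δ i) :
    Matrix.det (Matrix.of fun i j => 1 / (δ i + δ j)) =
      (1 / (2 ^ n * ∏ i, δ i)) *
      ∏ i, ∏ j ∈ Finset.univ.filter (fun j => i < j),
        ((δ j - δ i) / (δ j + δ i)) ^ 2 := by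
  have h : ∀ i j, δ i + δ j ≠ 0 := fun i j => (add_pos (hδ i) (hδ j)).ne'
  have hdiag : ∏ i, (δ i + δ i) = 2 ^ n * ∏ i, δ i := by
    simp [← two_mul, prod_mul_distrib]
  have hsym : ∀ i j, (δ i + δ j) * (δ j + δ i) = (δ j + δ i) ^ 2 := fun i j => by ring
  simp only [filter_lt_eq_Ioi, one_div]
  change Matrix.det (Matrix.cauchy δ δ) = _
  rw [Matrix.det_cauchy δ δ h, prod_prod_eq_prod_diag_mul_prod_prod_Ioi, hdiag]
  simp only [hsym, div_pow, prod_div_distrib]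
  field_simp
end

section
/- Let $n = m^2$ and define $\delta_{mp+q} = 4^{p+m}(m+q)$ for $0\le p < m$, $1\le q\le m$. Then the matrix $A = (1/(\delta_i+\delta_j))_{1\le i,j\le n}$ satisfies $\mathrm{per}(A) \le 1$. -/
open Finset
open scoped Nat

/-!
Every entry of `A` is at most `1 / (2 m 4^m)`, because each `δ_i` is at least `m 4^m`. Hence each
of the `n!` terms of the permanent is at most `(2 m 4^m)^{-n}`, and `n! ≤ n^n ≤ (2 m 4^m)^n` for
`n = m^2`.
-/

theorem Matrix.permanent_le_factorial_mul_pow {n R : Type*} [DecidableEq n] [Fintype n]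
    [CommSemiring R] [PartialOrder R] [IsOrderedRing R] (M : Matrix n n R) {b : R}
    (hM₀ : ∀ i j, 0 ≤ M i j) (hMb : ∀ i j, M i j ≤ b) :
    M.permanent ≤ (Fintype.card n)! * b ^ Fintype.card n :=
  calc M.permanent ≤ ∑ _σ : Equiv.Perm n, ∏ _i : n, b :=
        sum_le_sum fun σ _ ↦ prod_le_prod (fun i _ ↦ hM₀ _ _) fun i _ ↦ hMb _ _
    _ = (Fintype.card n)! * b ^ Fintype.card n := by
        simp [Fintype.card_perm, nsmul_eq_mul]

theorem Nat.factorial_mul_self_le (m : ℕ) : (m * m)! ≤ (2 * m * 4 ^ m) ^ (m * m) :=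
  calc (m * m)! ≤ (m * m) ^ (m * m) := factorial_le_pow _
    _ ≤ (2 * m * 4 ^ m) ^ (m * m) := by
        have hm : m ≤ 4 ^ m := (Nat.lt_pow_self (by norm_num)).le
        gcongr
        nlinarith

theorem mul_four_pow_le_four_pow_add_mul (m p : ℕ) {r : ℝ} (hr : 0 ≤ r) :
    m * (4 : ℝ) ^ m ≤ 4 ^ (p + m) * (m + (r + 1)) := by
  rw [mul_comm]
  exact mul_le_mul (pow_le_pow_right₀ (by norm_num) (Nat.le_add_left m p)) (by linarith)
    (by positivity) (by positivity)

/-- The permanent of the Cauchy matrix built from `δ_{mp+q} = 4^{p+m}(m+q)` is at most 1. -/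
theorem permanent_le_one (m : ℕ) (hm : 1 ≤ m) (δ : Fin (m * m) → ℝ)
    (hδ : ∀ i : Fin (m * m),
      δ i = (4 : ℝ) ^ ((i : ℕ) / m + m) * ((m : ℝ) + ((i : ℕ) % m + 1))) :
    ∑ σ : Equiv.Perm (Fin (m * m)), ∏ i, (1 / (δ i + δ (σ i))) ≤ 1 := by
  set c : ℝ := 2 * m * 4 ^ m
  have hc : 0 < c := by positivity
  -- `(i : ℕ) % m` in `hδ` is a remainder in the field `ℝ`, hence `0`; only its sign matters.
  have hδ_ge (i : Fin (m * m)) : m * (4 : ℝ) ^ m ≤ δ i := by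
    rw [hδ i]
    refine mul_four_pow_le_four_pow_add_mul m _ (le_of_eq ?_)
    exact (EuclideanDomain.mod_eq_zero.mpr (isUnit_iff_ne_zero.mpr (by positivity)).dvd).symm
  have hentry_nonneg (i j : Fin (m * m)) : 0 ≤ 1 / (δ i + δ j) :=
    one_div_nonneg.mpr (by linarith [hδ_ge i, hδ_ge j])
  have hentry (i j : Fin (m * m)) : 1 / (δ i + δ j) ≤ 1 / c :=
    one_div_le_one_div_of_le hc (by linarith [hδ_ge i, hδ_ge j])
  have hfac : ((m * m)! : ℝ) ≤ c ^ (m * m) := by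
    simp only [c]; exact_mod_cast Nat.factorial_mul_self_le m
  calc _ = (Matrix.of fun i j ↦ 1 / (δ i + δ j)).transpose.permanent := rfl
    _ ≤ (m * m)! * (1 / c) ^ (m * m) := by
        simpa only [Fintype.card_fin] using Matrix.permanent_le_factorial_mul_pow
          (Matrix.of fun i j ↦ 1 / (δ i + δ j)).transpose
          (fun i j ↦ hentry_nonneg j i) fun i j ↦ hentry j i
    _ ≤ c ^ (m * m) * (1 / c) ^ (m * m) := by gcongr
    _ = 1 := by rw [← mul_pow, mul_one_div_cancel hc.ne', one_pow]
end
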